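/- arXiv:1612.06651 — 8 statements merged into one kernel-verified Lean document; each statement's English description precedes it below -/
import Mathlib

section
/- Let X be a Hausdorff (T2) topological space and κ an infinite cardinal. Assume X is almost discretely Lindelöf and the tightness of X is at most κ. Then X contains no free sequence of length κ⁺ (the cardinal successor of κ); that is, there is no injective family (x_α)_{α<κ⁺} of points of X such that for every β < κ⁺ the closure of {x_α : α < β} and the closure of {x_α : β ≤ α < κ⁺} are disjoint. -/
open Cardinal Set Filter Topology

/-- A topological space is *almost discretely Lindelöf* if every subset that is
discrete in the subspace topology is contained in a Lindelöf subspace. -/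
def AlmostDiscretelyLindelof (X : Type*) [TopologicalSpace X] : Prop :=
  ∀ D : Set X, DiscreteTopology D → ∃ Y : Set X, D ⊆ Y ∧ IsLindelof Y

/-- `IsFreeSequence x` says that the injective transfinite family `x`, indexed by the
ordinals below `η`, is a free sequence: for every `β < η` the closure of the initial
part `{x_α : α < β}` is disjoint from the closure of the final part `{x_α : β ≤ α}`. -/
def IsFreeSequence {X : Type u} [TopologicalSpace X] {η : Ordinal.{u}}
    (x : Set.Iio η → X) : Prop :=
  Function.Injective x ∧
    ∀ β : Set.Iio η,
      Disjoint (closure (x '' {α | (α : Ordinal) < (β : Ordinal)}))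
        (closure (x '' {α | (β : Ordinal) ≤ (α : Ordinal)}))

/-! The range of a free sequence of length `κ⁺` is discrete, hence contained in a Lindelöf set `Y`.
As `κ⁺` has uncountable cofinality, countably many tails `closure (x '' Ici β)` always share a point
of the sequence, so Lindelöfness yields `p ∈ Y` in the closure of every tail. By tightness, `p` is
in the closure of at most `κ` points of the sequence; by regularity of `κ⁺` their indices are
bounded by some `γ < κ⁺`, so `p` is in the closures of both the initial segment below `γ` and the
tail from `γ`, contradicting freeness. -/

theorem Ordinal.exists_gt_of_lift_mk_lt_cof {ι : Type v} {η : Ordinal.{u}} (g : ι → Iio η)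
    (h : Cardinal.lift.{u} #ι < Cardinal.lift.{v} η.cof) : ∃ γ : Iio η, ∀ i, g i < γ := by
  rw [lift_cof] at h
  refine ⟨⟨⨆ i, (g i : Ordinal) + 1, lift_iSup_add_one_lt_of_lt_cof h fun i => (g i).2⟩,
    fun i => show (g i : Ordinal) < _ from ?_⟩
  have hbdd : BddAbove (range fun i => (g i : Ordinal) + 1) :=
    ⟨η, forall_mem_range.2 fun i => Order.add_one_le_of_lt (g i).2⟩
  exact (Order.lt_add_one_iff.2 le_rfl).trans_le (le_ciSup hbdd i :)

section FreeSequence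

variable {X : Type u} [TopologicalSpace X] {η : Ordinal.{u}} {x : Iio η → X}

theorem IsFreeSequence.apply_notMem_closure_image_Ioi (hx : IsFreeSequence x) (β : Iio η) :
    x β ∉ closure (x '' Ioi β) := by
  by_cases hβ : Order.succ (β : Ordinal) < η
  · have hIoi : Ioi β = {α : Iio η | ((⟨_, hβ⟩ : Iio η) : Ordinal) ≤ α} := by
      ext α
      exact (Order.succ_le_iff (a := (β : Ordinal))).symm
    rw [hIoi]
    exact disjoint_left.1 (hx.2 ⟨_, hβ⟩) (subset_closure ⟨β, Order.lt_succ (β : Ordinal), rfl⟩)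
  · have hIoi : Ioi β = ∅ :=
      eq_empty_of_forall_notMem fun α hα =>
        hβ ((Order.succ_le_of_lt (α := Ordinal) hα).trans_lt α.2)
    simp [hIoi]

theorem IsFreeSequence.discreteTopology_range (hx : IsFreeSequence x) :
    DiscreteTopology (range x) := by
  refine discreteTopology_subtype_iff'.2 (forall_mem_range.2 fun β => ?_)
  refine ⟨(closure (x '' Iio β))ᶜ ∩ (closure (x '' Ioi β))ᶜ,
    isClosed_closure.isOpen_compl.inter isClosed_closure.isOpen_compl, ?_⟩
  have hβ : x β ∉ closure (x '' Iio β) :=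
    disjoint_right.1 (hx.2 β) (subset_closure (mem_image_of_mem x (le_refl β)))
  refine Subset.antisymm ?_ (singleton_subset_iff.2
    ⟨⟨hβ, hx.apply_notMem_closure_image_Ioi β⟩, mem_range_self β⟩)
  rintro _ ⟨⟨hlt, hgt⟩, α, rfl⟩
  rcases lt_trichotomy α β with h | rfl | h
  · exact absurd (subset_closure (mem_image_of_mem x h)) hlt
  · rfl
  · exact absurd (subset_closure (mem_image_of_mem x h)) hgt

end FreeSequence

theorem IsLindelof.inter_iInter_closure_image_Ici_nonempty {X : Type*} [TopologicalSpace X]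
    {η : Ordinal.{u}} {x : Iio η → X} {Y : Set X} (hY : IsLindelof Y) (hxY : range x ⊆ Y)
    (hη : ℵ₀ < η.cof) : (Y ∩ ⋂ β, closure (x '' Ici β)).Nonempty := by
  by_contra! hempty
  obtain ⟨u, hu, huY⟩ := hY.elim_countable_subfamily_closed (fun β => closure (x '' Ici β))
    (fun _ => isClosed_closure) hempty
  have : Countable u := hu.to_subtype
  obtain ⟨γ, hγ⟩ := Ordinal.exists_gt_of_lift_mk_lt_cof (Subtype.val : u → Iio η)
    ((lift_le_aleph0.2 (mk_le_aleph0 (α := u))).trans_lt (aleph0_lt_lift.2 hη))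
  have hxγ : x γ ∈ Y ∩ ⋂ β ∈ u, closure (x '' Ici β) :=
    ⟨hxY (mem_range_self γ), mem_iInter₂.2 fun β hβ =>
      subset_closure (mem_image_of_mem x (hγ ⟨β, hβ⟩).le)⟩
  rw [huY] at hxγ
  exact hxγ

theorem exists_mem_closure_image_Iio_of_tightness {X : Type u} [TopologicalSpace X]
    {κ : Cardinal.{u}} (htight : ∀ A : Set X, ∀ x ∈ closure A, ∃ B ⊆ A, #B ≤ κ ∧ x ∈ closure B)
    {η : Ordinal.{u}} (hκ : κ < η.cof) {x : Iio η → X} {s : Set (Iio η)} {p : X}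
    (hp : p ∈ closure (x '' s)) : ∃ γ, p ∈ closure (x '' Iio γ) := by
  obtain ⟨B, hBx, hBκ, hpB⟩ := htight _ p hp
  choose g hg using fun b : B => (hBx b.2).imp fun _ => And.right
  obtain ⟨γ, hγ⟩ := Ordinal.exists_gt_of_lift_mk_lt_cof g (Cardinal.lift_lt.2 (hBκ.trans_lt hκ))
  exact ⟨γ, closure_mono (fun b hb => ⟨g ⟨b, hb⟩, hγ _, hg _⟩ : B ⊆ x '' Iio γ) hpB⟩

theorem no_free_sequence_of_length_succ_of_almostDiscretelyLindelof_general
    {X : Type u} [TopologicalSpace X] (κ : Cardinal.{u})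
    (hκ : ℵ₀ ≤ κ)
    (hADL : AlmostDiscretelyLindelof X)
    (htight : ∀ A : Set X, ∀ x ∈ closure A, ∃ B ⊆ A, #B ≤ κ ∧ x ∈ closure B) :
    ¬ ∃ x : Set.Iio (Order.succ κ).ord → X, IsFreeSequence x := by
  rintro ⟨x, hx⟩
  have hκcof : κ < (Order.succ κ).ord.cof := by
    rw [(isRegular_succ hκ).cof_ord]
    exact Order.lt_succ κ
  obtain ⟨Y, hxY, hY⟩ := hADL _ hx.discreteTopology_range
  obtain ⟨p, -, hp⟩ := hY.inter_iInter_closure_image_Ici_nonempty hxY (hκ.trans_lt hκcof)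
  rw [mem_iInter] at hp
  have hpos : 0 < (Order.succ κ).ord :=
    ord_pos.2 (aleph0_pos.trans_le (hκ.trans (Order.le_succ κ)))
  obtain ⟨γ, hγ⟩ := exists_mem_closure_image_Iio_of_tightness htight hκcof (hp ⟨0, hpos⟩)
  exact disjoint_left.1 (hx.2 γ) hγ (hp γ)

theorem no_free_sequence_of_length_succ_of_almostDiscretelyLindelof
    {X : Type u} [TopologicalSpace X] [T2Space X] (κ : Cardinal.{u})
    (hκ : ℵ₀ ≤ κ)
    (hADL : AlmostDiscretelyLindelof X)
    (htight : ∀ A : Set X, ∀ x ∈ closure A, ∃ B ⊆ A, #B ≤ κ ∧ x ∈ closure B) :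
    ¬ ∃ x : Set.Iio (Order.succ κ).ord → X, IsFreeSequence x :=
  no_free_sequence_of_length_succ_of_almostDiscretelyLindelof_general κ hκ hADL htight
end

section
/- Let X be a Hausdorff (T2) topological space and κ an infinite cardinal. Assume X is almost discretely Lindelöf and every point of X has a neighborhood basis of cardinality at most κ. Then for every subset D ⊆ X that is discrete in the subspace topology, the closure of D has cardinality at most 2^κ. -/
/-!
Arhangel'skiĭ's closing-off argument bounds a Lindelöf subspace `Y` of a Hausdorff space of
character `κ` by `2 ^ κ`: take a set `H ⊆ Y` of size `≤ 2 ^ κ` that contains, for every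
`C ⊆ H` of size `≤ κ`, the points of `Y` in the closure of `C` and a point of `Y` outside each
family of basic neighbourhoods of the points of `C` that does not cover `Y`. Then `H` is closed
in `Y`, hence Lindelöf, and a point of `Y \ H` would give a countable basic cover of `H`
missing it, contradicting the choice of witnesses. A discrete set lies in a Lindelöf subspace,
so it has at most `2 ^ κ` points, and its closure at most `(2 ^ κ) ^ κ = 2 ^ κ`.
-/

open Cardinal Set Filter Topology

universe u

theorem Filter.exists_hasBasis_of_mk_le {α ι : Type u} {l : Filter α} {B : Set (Set α)}
    (hBι : #B ≤ #ι) (hBl : ∀ b ∈ B, b ∈ l) (hB : ∀ t ∈ l, ∃ b ∈ B, b ⊆ t) :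
    ∃ s : ι → Set α, l.HasBasis (fun _ => True) s := by
  have hBasis : l.HasBasis (fun _ : B => True) Subtype.val :=
    ⟨fun t => ⟨fun ht => by simpa using hB t ht,
      fun ⟨b, _, hbt⟩ => mem_of_superset (hBl b b.2) hbt⟩⟩
  obtain ⟨b₀, hb₀, -⟩ := hB univ univ_mem
  have : Nonempty B := ⟨⟨b₀, hb₀⟩⟩
  obtain ⟨j⟩ := hBι
  exact ⟨_, hBasis.comp_surjective (Function.invFun_surjective j.injective)⟩

theorem exists_mk_le_forall_small_subset_image_subset {α : Type u} {κ μ : Cardinal.{u}}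
    (hκ : ℵ₀ ≤ κ) (hκμ : κ < μ) (hμ : μ ^ κ ≤ μ) (f : Set α → Set α)
    (hf : ∀ C : Set α, #C ≤ κ → #(f C) ≤ μ) :
    ∃ H : Set α, #H ≤ μ ∧ ∀ C ⊆ H, #C ≤ κ → f C ⊆ H := by
  have hμ₀ : ℵ₀ ≤ μ := hκ.trans hκμ.le
  -- Stages indexed by ordinals; the regularity of `κ⁺` puts any `κ` points of the union of the
  -- first `κ⁺` stages below a single stage.
  obtain ⟨stage, hstage⟩ : ∃ stage : Ordinal.{u} → Set α, ∀ o,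
      stage o = ⋃ C : {C : Set α // C ⊆ ⋃ j < o, stage j ∧ #C ≤ κ}, f C :=
    ⟨WellFoundedLT.fix fun o stage =>
      ⋃ C : {C : Set α // C ⊆ ⋃ j, ⋃ h : j < o, stage j h ∧ #C ≤ κ}, f C,
      WellFoundedLT.fix_eq _⟩
  have hstage_card (o : Ordinal) (ho : o.card ≤ κ) : #(stage o) ≤ μ := by
    induction o using WellFoundedLT.induction with
    | _ o ih =>
      have hprev : #(⋃ j < o, stage j) ≤ μ := mk_biUnion_le_of_le (ho.trans hκμ.le) hμ₀ _
        fun j hj => ih j hj ((Ordinal.card_le_card hj.le).trans ho)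
      rw [hstage]
      refine (mk_iUnion_le _).trans ?_
      calc _ ≤ μ ^ κ * μ := mul_le_mul'
            ((mk_bounded_subset_le _ κ).trans (power_le_power_right (max_le hprev hμ₀)))
            (ciSup_le' fun C => hf _ C.2.2)
        _ ≤ μ * μ := mul_le_mul_left hμ _
        _ = μ := mul_eq_self hμ₀
  refine ⟨⋃ o < (Order.succ κ).ord, stage o,
    mk_biUnion_le_of_le ?_ hμ₀ _ fun o ho => hstage_card o ?_, ?_⟩
  · rw [card_ord]; exact Order.succ_le_of_lt hκμ
  · exact Order.lt_succ_iff.1 (lt_ord.1 ho)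
  intro C hC hCκ
  choose o ho hco using fun c : C => by simpa using hC c.2
  have hsup : ⨆ c, o c + 1 < (Order.succ κ).ord := Ordinal.iSup_add_one_lt_of_lt_cof
    (by rw [(isRegular_succ hκ).cof_ord]; exact Order.lt_succ_of_le hCκ) ho
  calc f C ⊆ stage (⨆ c, o c + 1) := by
        rw [hstage]
        refine subset_iUnion_of_subset ⟨C, fun c hc => ?_, hCκ⟩ subset_rfl
        exact mem_iUnion₂.2 ⟨_, Ordinal.lt_iSup_add_one o ⟨c, hc⟩, hco ⟨c, hc⟩⟩
    _ ⊆ _ := subset_iUnion₂_of_subset (⨆ c, o c + 1) hsup subset_rfl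

section NhdsBasis

variable {X ι : Type u} [TopologicalSpace X] {g : X → ι → Set X}

theorem Filter.HasBasis.exists_subset_mk_le_mem_closure {x : X} {s : ι → Set X}
    (hx : (𝓝 x).HasBasis (fun _ => True) s) {A : Set X} (hxA : x ∈ closure A) :
    ∃ C ⊆ A, #C ≤ #ι ∧ x ∈ closure C := by
  choose a haA has using fun i => (mem_closure_iff_nhds_basis hx).1 hxA i trivial
  refine ⟨range a, range_subset_iff.2 haA, mk_range_le, ?_⟩
  exact (mem_closure_iff_nhds_basis hx).2 fun i _ => ⟨a i, mem_range_self i, has i⟩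

-- A point of `closure A` is determined by choosing a point of `A` in `g x i ∩ g x j` for all
-- `i, j`: basic neighbourhoods of distinct points inside disjoint open sets would share it.
theorem mk_closure_le_pow [T2Space X] (hg : ∀ x, (𝓝 x).HasBasis (fun _ => True) (g x))
    (hι : ℵ₀ ≤ #ι) (A : Set X) : #(closure A) ≤ #A ^ #ι := by
  choose Φ hΦ using fun (x : closure A) (p : ι × ι) => mem_closure_iff_nhds.1 x.2 _
    (inter_mem ((hg x).mem_of_mem (i := p.1) trivial) ((hg x).mem_of_mem (i := p.2) trivial))
  have hinj : Function.Injective fun x p => (⟨Φ x p, (hΦ x p).2⟩ : A) := by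
    intro x y hxy
    by_contra hne
    obtain ⟨U, V, hU, hV, hUV⟩ := t2_separation_nhds (Subtype.coe_ne_coe.2 hne)
    obtain ⟨i, -, hiU⟩ := (hg x).mem_iff.1 hU
    obtain ⟨j, -, hjV⟩ := (hg y).mem_iff.1 hV
    have hxy' : Φ x (i, j) = Φ y (i, j) := congrArg Subtype.val (congrFun hxy (i, j))
    exact hUV.ne_of_mem (hiU (hΦ x (i, j)).1.1) (hjV (hΦ y (i, j)).1.2) hxy'
  calc #(closure A) ≤ #A ^ #(ι × ι) := (mk_le_of_injective hinj).trans_eq (power_def _ _).symm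
    _ = #A ^ #ι := by rw [mk_prod, lift_id, mul_eq_self hι]

theorem IsLindelof.subset_of_relClosed_of_countable_covers [T1Space X]
    (hg : ∀ x, (𝓝 x).HasBasis (fun _ => True) (g x)) {Y H : Set X} (hY : IsLindelof Y)
    (hHY : H ⊆ Y) (hcl : closure H ∩ Y ⊆ H)
    (hcov : ∀ C ⊆ H, C.Countable → ∀ s : X → ι,
      H ⊆ ⋃ c ∈ C, g c (s c) → Y ⊆ ⋃ c ∈ C, g c (s c)) :
    Y ⊆ H := by
  intro q hqY
  by_contra hqH
  have hH : IsLindelof H := by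
    rw [show H = Y ∩ closure H from
      (subset_inter hHY subset_closure).antisymm fun x hx => hcl ⟨hx.2, hx.1⟩]
    exact hY.inter_right isClosed_closure
  have : Nonempty ι := (hg q).ex_mem.nonempty
  choose! s hs using fun x (hx : x ∈ H) =>
    (hg x).mem_iff.1 (compl_singleton_mem_nhds (ne_of_mem_of_not_mem hx hqH))
  obtain ⟨C, hCc, hCH, hHC⟩ :=
    hH.elim_nhds_subcover (fun x => g x (s x)) fun x _ => (hg x).mem_of_mem trivial
  obtain ⟨c, hc, hqc⟩ := mem_iUnion₂.1 (hcov C hCH hCc s hHC hqY)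
  exact (hs c (hCH c hc)).2 hqc rfl

theorem IsLindelof.mk_le_two_pow [T2Space X] (hg : ∀ x, (𝓝 x).HasBasis (fun _ => True) (g x))
    (hι : ℵ₀ ≤ #ι) {Y : Set X} (hY : IsLindelof Y) : #Y ≤ 2 ^ #ι := by
  let witness (C : Set X) (s : {s : C → ι // ¬Y ⊆ ⋃ c : C, g c (s c)}) : X :=
    (sdiff_nonempty.2 s.2).some
  let step (C : Set X) : Set X := closure C ∩ Y ∪ range (witness C)
  have hstepY (C : Set X) : step C ⊆ Y :=
    union_subset inter_subset_right
      (range_subset_iff.2 fun s => (sdiff_nonempty.2 s.2).some_mem.1)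
  have hstep_card (C : Set X) (hC : #C ≤ #ι) : #(step C) ≤ 2 ^ #ι := by
    calc #(step C) ≤ #C ^ #ι + #ι ^ #C := (mk_union_le _ _).trans <| add_le_add
          ((mk_le_mk_of_subset inter_subset_left).trans (mk_closure_le_pow hg hι C))
          (mk_range_le.trans ((mk_subtype_le _).trans_eq (power_def _ _).symm))
      _ ≤ #ι ^ #ι + #ι ^ #ι := add_le_add (power_le_power_right hC)
          (power_le_power_left (aleph0_pos.trans_le hι).ne' hC)
      _ = 2 ^ #ι := by rw [power_self_eq hι, add_eq_self (hι.trans (cantor _).le)]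
  obtain ⟨H, hH, hHstep⟩ := exists_mk_le_forall_small_subset_image_subset hι (cantor _)
    (by rw [← power_mul, mul_eq_self hι]) step hstep_card
  have hHYstep : ∀ C ⊆ H ∩ Y, #C ≤ #ι → step C ⊆ H ∩ Y := fun C hC hCι =>
    subset_inter (hHstep C (hC.trans inter_subset_left) hCι) (hstepY C)
  suffices hYH : Y ⊆ H ∩ Y from (mk_le_mk_of_subset (hYH.trans inter_subset_left)).trans hH
  refine hY.subset_of_relClosed_of_countable_covers hg inter_subset_right ?_ ?_
  · rintro x ⟨hxH, hxY⟩
    obtain ⟨C, hCH, hCι, hxC⟩ := (hg x).exists_subset_mk_le_mem_closure hxH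
    exact hHYstep C hCH hCι (Or.inl ⟨hxC, hxY⟩)
  · intro C hCH hCc s hHC
    by_contra hYC
    rw [biUnion_eq_iUnion] at hYC hHC
    have hw := (sdiff_nonempty.2 hYC).some_mem
    exact hw.2 (hHC (hHYstep C hCH (hCc.le_aleph0.trans hι) (Or.inr ⟨⟨_, hYC⟩, rfl⟩)))

end NhdsBasis

theorem closure_discrete_card_le_of_almostDiscretelyLindelof
    {X : Type u} [TopologicalSpace X] [T2Space X] (κ : Cardinal.{u})
    (hκ : ℵ₀ ≤ κ)
    (hADL : AlmostDiscretelyLindelof X)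
    (hχ : ∀ x : X, ∃ B : Set (Set X), #B ≤ κ ∧ (∀ b ∈ B, b ∈ 𝓝 x) ∧
      ∀ s ∈ 𝓝 x, ∃ b ∈ B, b ⊆ s) :
    ∀ D : Set X, DiscreteTopology D → #(closure D) ≤ 2 ^ κ := by
  intro D hD
  choose B hBκ hBnhds hB using hχ
  choose g hg using fun x =>
    exists_hasBasis_of_mk_le (ι := κ.out) ((hBκ x).trans_eq (mk_out κ).symm) (hBnhds x) (hB x)
  rw [← mk_out κ] at hκ ⊢
  obtain ⟨Y, hDY, hY⟩ := hADL D hD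
  have hDcard : #D ≤ 2 ^ #κ.out := (mk_le_mk_of_subset hDY).trans (hY.mk_le_two_pow hg hκ)
  calc #(closure D) ≤ #D ^ #κ.out := mk_closure_le_pow hg hκ D
    _ ≤ (2 ^ #κ.out) ^ #κ.out := power_le_power_right hDcard
    _ = 2 ^ #κ.out := by rw [← power_mul, mul_eq_self hκ]
end

section
/- Let X be a regular Hausdorff (T3) topological space and κ an infinite cardinal. Assume that every subspace of X has Lindelöf number at most κ, i.e., for every subset Y ⊆ X, every cover of Y by open subsets of X has a subfamily of cardinality at most κ that still covers Y. Then for every closed set H ⊆ X there is a family of at most κ open subsets of X whose intersection is exactly H. -/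
open Cardinal Set Filter Topology

theorem closed_psi_le_of_hereditarily_lindelof
    {X : Type u} [TopologicalSpace X] [T3Space X] (κ : Cardinal.{u})
    (hκ : ℵ₀ ≤ κ)
    (hL : ∀ Y : Set X, ∀ 𝒰 : Set (Set X), (∀ U ∈ 𝒰, IsOpen U) → Y ⊆ ⋃₀ 𝒰 →
      ∃ 𝒱 ⊆ 𝒰, #𝒱 ≤ κ ∧ Y ⊆ ⋃₀ 𝒱) :
    ∀ H : Set X, IsClosed H →
      ∃ 𝒰 : Set (Set X), #𝒰 ≤ κ ∧ (∀ U ∈ 𝒰, IsOpen U) ∧ ⋂₀ 𝒰 = H := by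
  intro H hH
  set 𝒰₀ : Set (Set X) := {V | IsOpen V ∧ closure V ⊆ Hᶜ} with h𝒰₀
  have hcov : Hᶜ ⊆ ⋃₀ 𝒰₀ := by
    intro x hx
    obtain ⟨C, hCmem, hCclosed, hCsub⟩ :=
      exists_mem_nhds_isClosed_subset (hH.isOpen_compl.mem_nhds hx)
    refine ⟨interior C, ⟨isOpen_interior, ?_⟩, mem_interior_iff_mem_nhds.2 hCmem⟩
    calc closure (interior C) ⊆ closure C := closure_mono interior_subset
    _ = C := hCclosed.closure_eq
    _ ⊆ Hᶜ := hCsub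
  obtain ⟨𝒱, h𝒱sub, h𝒱card, h𝒱cov⟩ := hL Hᶜ 𝒰₀ (fun U hU => hU.1) hcov
  refine ⟨(fun V => (closure V)ᶜ) '' 𝒱, le_trans Cardinal.mk_image_le h𝒱card, ?_, ?_⟩
  · rintro U ⟨V, -, rfl⟩
    exact isClosed_closure.isOpen_compl
  · ext x
    simp only [mem_sInter, mem_image]
    constructor
    · intro hx
      by_contra hxH
      obtain ⟨V, hV𝒱, hxV⟩ := h𝒱cov hxH
      exact hx _ ⟨V, hV𝒱, rfl⟩ (subset_closure hxV)
    · rintro hxH U ⟨V, hV𝒱, rfl⟩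
      exact fun hxc => (h𝒱sub hV𝒱).2 hxc hxH
end

section
/- Let X be a topological space and λ a cardinal. Assume that every subset D ⊆ X that is discrete in the subspace topology has closure of cardinality at most λ. Then every right-separated subset of X has cardinality at most λ; that is, if S ⊆ X admits a well-ordering under which every initial segment of S is open in the subspace topology of S, then #S ≤ λ. -/
/-!
In a space whose initial segments are open for some well-order, the least element `t` of a
nonempty open set `U` is isolated, since `U ∩ Iic t = {t}` and `Iic t` is either the whole space
or the initial segment below the successor of `t`. So the isolated points of a right-separated
set `S` form a discrete set dense in `S`, whence `#S` is bounded by the size of its closure.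
-/

open Cardinal Set Topology

section

variable {X : Type*} [TopologicalSpace X]

lemma isDiscrete_setOf_isOpen_singleton : IsDiscrete {x : X | IsOpen ({x} : Set X)} :=
  isDiscrete_iff_forall_mem_exists_isOpen.2 fun x hx =>
    ⟨{x}, hx, inter_eq_left.2 (singleton_subset_iff.2 hx)⟩

section WellFoundedLT

variable [LinearOrder X] [WellFoundedLT X]

lemma isOpen_Iic_of_forall_isOpen_Iio (h : ∀ a : X, IsOpen (Iio a)) (a : X) :
    IsOpen (Iic a) := by
  by_cases ha : IsMax a
  · rw [ha.isTop.Iic_eq]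
    exact isOpen_univ
  · let := SuccOrder.ofLinearWellFoundedLT X
    rw [← Order.Iio_succ_of_not_isMax ha]
    exact h _

lemma dense_setOf_isOpen_singleton_of_forall_isOpen_Iio (h : ∀ a : X, IsOpen (Iio a)) :
    Dense {x : X | IsOpen ({x} : Set X)} := by
  refine dense_iff_inter_open.2 fun U hU hne => ?_
  obtain ⟨t, htU, hmin⟩ := wellFounded_lt.has_min U hne
  have hUt : U ∩ Iic t = {t} :=
    eq_singleton_iff_unique_mem.2 ⟨⟨htU, le_rfl⟩,
      fun y ⟨hyU, hyt⟩ => hyt.antisymm (not_lt.1 (hmin y hyU))⟩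
  refine ⟨t, htU, ?_⟩
  change IsOpen {t}
  rw [← hUt]
  exact hU.inter (isOpen_Iic_of_forall_isOpen_Iio h t)

end WellFoundedLT

lemma dense_setOf_isOpen_singleton_of_isWellOrder (r : X → X → Prop) [IsWellOrder X r]
    (h : ∀ a, IsOpen {b | r b a}) : Dense {x : X | IsOpen ({x} : Set X)} := by
  let := IsWellOrder.linearOrder r
  have : WellFoundedLT X := ⟨IsWellFounded.wf (r := r)⟩
  exact dense_setOf_isOpen_singleton_of_forall_isOpen_Iio h

end

theorem rightSeparated_card_le_of_closure_discrete_card_le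
    {X : Type u} [TopologicalSpace X] (lam : Cardinal.{u})
    (hg : ∀ D : Set X, DiscreteTopology D → #(closure D) ≤ lam) :
    ∀ S : Set X,
      (∃ r : S → S → Prop, IsWellOrder S r ∧ ∀ x : S, IsOpen {y : S | r y x}) →
      #S ≤ lam := by
  rintro S ⟨r, hr, hopen⟩
  set D : Set X := ((↑) : S → X) '' {x : S | IsOpen ({x} : Set S)}
  have hD : IsDiscrete D := isDiscrete_setOf_isOpen_singleton.image IsInducing.subtypeVal
  have hSD : S ⊆ closure D :=
    Subtype.dense_iff.1 (dense_setOf_isOpen_singleton_of_isWellOrder r hopen)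
  calc #S ≤ #(closure D) := mk_le_mk_of_subset hSD
    _ ≤ lam := hg D (isDiscrete_iff_discreteTopology.1 hD)
end

section
/- Let μ be an infinite cardinal and let X be a Hausdorff (T2) μ-sequential topological space such that the pseudocharacter of X is at most 2^μ and for every free set D ⊆ X the closure of D has Lindelöf number at most μ (every cover of the closure of D by open subsets of X has a subfamily of size at most μ covering it). Then the cardinality of X is at most 2^μ. -/
open Cardinal Set Filter Topology

/-- A space is `μ`-sequential if for every non-closed set `A` there are a limit ordinal
`η` of cardinality at most `μ`, a transfinite family of points of `A` indexed by the
ordinals below `η`, and a point `p ∉ A` to which this family converges, i.e. every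
neighborhood of `p` contains a final segment of the family. -/
def MuSequential (μ : Cardinal.{u}) (X : Type u) [TopologicalSpace X] : Prop :=
  ∀ A : Set X, ¬ IsClosed A →
    ∃ (η : Ordinal.{u}), Order.IsSuccLimit η ∧ η.card ≤ μ ∧
      ∃ (x : Set.Iio η → X) (p : X), p ∉ A ∧ (∀ α, x α ∈ A) ∧
        ∀ U ∈ 𝓝 p, ∃ β : Set.Iio η, ∀ α : Set.Iio η,
          (β : Ordinal) ≤ (α : Ordinal) → x α ∈ U

/-- A set `D` is *free* if it can be enumerated as a free sequence: an injective
transfinite family whose every initial part has closure disjoint from the closure of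
the corresponding final part. -/
def IsFreeSet {X : Type u} [TopologicalSpace X] (D : Set X) : Prop :=
  ∃ (η : Ordinal.{u}) (x : Set.Iio η → X), Function.Injective x ∧ Set.range x = D ∧
    ∀ β : Set.Iio η,
      Disjoint (closure (x '' {α | (α : Ordinal) < (β : Ordinal)}))
        (closure (x '' {α | (β : Ordinal) ≤ (α : Ordinal)}))

/-!
A limit of a sequence of length at most `μ` is determined by the chain of tails of the
sequence, so in a Hausdorff space at most `2 ^ μ` points are limits of such sequences in a set
of size at most `2 ^ μ`; by `μ`-sequentiality a set containing all these limits is closed.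

Every closed set `H` has Lindelöf number at most `μ`. Otherwise pick, for `ξ < μ⁺`, a point of
`H` outside the small subcovers chosen for the closures of all earlier initial segments: this is
a free sequence of length `μ⁺`, and the complements of the closures of its tails cover the
closure of its range without a subcover of size `μ`.

Closing off `μ⁺` times under such limits and under a choice of a point outside each small union
of members of the pseudobases at points already constructed gives a closed `H` of size at most
`2 ^ μ`. If `p ∉ H`, the members of these pseudobases missing `p` cover `H`; a subcover of size
`μ` misses a point of `H`, a contradiction.
-/

universe u

open Ordinal OrdinalApprox Order

section SetTheory

variable {α : Type u}

theorem exists_lt_subset_of_subset_biUnion {S : Ordinal.{u} → Set α} (hS : Monotone S)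
    {Λ : Ordinal.{u}} {E : Set α} (hE : #E < Λ.cof) (hEΛ : E ⊆ ⋃ β < Λ, S β) :
    ∃ γ < Λ, E ⊆ S γ := by
  have hβ : ∀ e : E, ∃ β < Λ, (e : α) ∈ S β := fun e => by simpa using hEΛ e.2
  choose β hβΛ heβ using hβ
  exact ⟨⨆ e, β e, iSup_lt_of_lt_cof hE hβΛ,
    fun e he => hS (Ordinal.le_iSup β ⟨e, he⟩) (heβ ⟨e, he⟩)⟩

theorem mk_lfpApprox_le {κ : Cardinal.{u}} (hκ : ℵ₀ ≤ κ) (Q : Set α →o Set α)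
    (hQ : ∀ Y : Set α, #Y ≤ κ → #(Q Y) ≤ κ) {a : Ordinal.{u}} (ha : a.card ≤ κ) :
    #(lfpApprox Q (∅ : Set α) a : Set α) ≤ κ := by
  induction a using WellFoundedLT.induction with
  | ind a IH =>
    unfold lfpApprox
    simp only [sup_eq_union, empty_union, iSup_eq_iUnion]
    exact mk_biUnion_le_of_le ha hκ _ fun b hb =>
      hQ _ (IH b hb ((card_le_card hb.le).trans ha))

theorem exists_mk_le_apply_subset {μ κ : Cardinal.{u}} (hμ : ℵ₀ ≤ μ) (hμκ : μ < κ)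
    (Q : Set α →o Set α) (hQcard : ∀ Y : Set α, #Y ≤ κ → #(Q Y) ≤ κ)
    (hQsmall : ∀ Y, ∀ x ∈ Q Y, ∃ E ⊆ Y, #E ≤ μ ∧ x ∈ Q E) :
    ∃ H : Set α, #H ≤ κ ∧ Q H ⊆ H := by
  set Λ := (succ μ).ord
  have hΛ : μ < Λ.cof := by rw [(isRegular_succ hμ).cof_ord]; exact lt_succ μ
  have hΛκ : Λ.card ≤ κ := by rw [card_ord]; exact succ_le_of_lt hμκ
  refine ⟨lfpApprox Q ∅ Λ, mk_lfpApprox_le (hμ.trans hμκ.le) Q hQcard hΛκ, fun x hx => ?_⟩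
  obtain ⟨E, hEΛ, hEμ, hxE⟩ := hQsmall _ x hx
  rw [lfpApprox_of_isSuccLimit Q (isSuccLimit_ord (hμ.trans (le_succ μ)))] at hEΛ
  obtain ⟨γ, hγ, hEγ⟩ := exists_lt_subset_of_subset_biUnion (lfpApprox_mono_right Q)
    (hEμ.trans_lt hΛ) (by simpa using hEΛ)
  exact apply_lfpApprox_le_lfpApprox_of_lt Q hγ (Q.mono hEγ hxE)

theorem mk_bounded_subset_le_two_pow {μ : Cardinal.{u}} (hμ : ℵ₀ ≤ μ) {s : Set α}
    (hs : #s ≤ 2 ^ μ) : #{t : Set α | t ⊆ s ∧ #t ≤ μ} ≤ 2 ^ μ :=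
  calc #{t : Set α | t ⊆ s ∧ #t ≤ μ} ≤ max #s ℵ₀ ^ μ := mk_bounded_subset_le s μ
    _ ≤ (2 ^ μ) ^ μ := power_le_power_right (max_le hs (hμ.trans (cantor μ).le))
    _ = 2 ^ μ := by rw [← power_mul, mul_eq_self hμ]

/-- One point outside `⋃₀ 𝒱` for each family `𝒱` of at most `μ` members of the families
`𝔅 y`, `y ∈ Y`, that does not cover everything. -/
def escapePoints (μ : Cardinal.{u}) (𝔅 : α → Set (Set α)) (Y : Set α) : Set α :=
  range fun 𝒱 : {𝒱 : Set (Set α) // 𝒱 ⊆ ⋃ y ∈ Y, 𝔅 y ∧ #𝒱 ≤ μ ∧ (⋃₀ 𝒱)ᶜ.Nonempty} =>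
    𝒱.2.2.2.some

variable {μ : Cardinal.{u}} {𝔅 : α → Set (Set α)}

theorem escapePoints_mono : Monotone (escapePoints μ 𝔅) := by
  rintro Y Z hYZ _ ⟨⟨𝒱, h𝒱, h𝒱μ, hne⟩, rfl⟩
  exact ⟨⟨𝒱, h𝒱.trans (biUnion_subset_biUnion_left hYZ), h𝒱μ, hne⟩, rfl⟩

theorem exists_mem_escapePoints {Y : Set α} {𝒱 : Set (Set α)} (h𝒱 : 𝒱 ⊆ ⋃ y ∈ Y, 𝔅 y)
    (h𝒱μ : #𝒱 ≤ μ) (hne : (⋃₀ 𝒱)ᶜ.Nonempty) : ∃ x ∈ escapePoints μ 𝔅 Y, x ∉ ⋃₀ 𝒱 :=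
  ⟨_, ⟨⟨𝒱, h𝒱, h𝒱μ, hne⟩, rfl⟩, hne.some_mem⟩

theorem exists_subset_of_mem_escapePoints {Y : Set α} {x : α} (hx : x ∈ escapePoints μ 𝔅 Y) :
    ∃ E ⊆ Y, #E ≤ μ ∧ x ∈ escapePoints μ 𝔅 E := by
  obtain ⟨⟨𝒱, h𝒱, h𝒱μ, hne⟩, rfl⟩ := hx
  choose c hcY hc using fun V : 𝒱 => mem_iUnion₂.1 (h𝒱 V.2)
  refine ⟨range c, range_subset_iff.2 hcY, mk_range_le.trans h𝒱μ,
    ⟨𝒱, fun V hV => ?_, h𝒱μ, hne⟩, rfl⟩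
  exact mem_iUnion₂.2 ⟨_, mem_range_self ⟨V, hV⟩, hc ⟨V, hV⟩⟩

theorem mk_escapePoints_le (hμ : ℵ₀ ≤ μ) (h𝔅 : ∀ y, #(𝔅 y) ≤ 2 ^ μ) {Y : Set α}
    (hY : #Y ≤ 2 ^ μ) : #(escapePoints μ 𝔅 Y) ≤ 2 ^ μ := by
  have h2μ : ℵ₀ ≤ 2 ^ μ := hμ.trans (cantor μ).le
  have h𝔅Y : #(⋃ y ∈ Y, 𝔅 y) ≤ 2 ^ μ :=
    calc #(⋃ y ∈ Y, 𝔅 y) ≤ #Y * ⨆ y : Y, #(𝔅 y) := mk_biUnion_le _ _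
      _ ≤ 2 ^ μ * 2 ^ μ := mul_le_mul' hY (ciSup_le' fun y => h𝔅 y)
      _ = 2 ^ μ := mul_eq_self h2μ
  exact mk_range_le.trans ((mk_subtype_mono fun 𝒱 h => ⟨h.1, h.2.1⟩).trans
    (mk_bounded_subset_le_two_pow hμ h𝔅Y))

end SetTheory

noncomputable def avoidingSeq {α γ : Type*} (W : Set α → Set γ) (pick : Set γ → α) :
    Ordinal.{u} → α
  | ξ => pick (⋃ ζ : Iic ξ, W (range fun δ : Iio (ζ : Ordinal) => avoidingSeq W pick δ))
termination_by ξ => ξ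
decreasing_by exact lt_of_lt_of_le δ.2 ζ.2

theorem avoidingSeq_eq {α γ : Type*} (W : Set α → Set γ) (pick : Set γ → α) (ξ : Ordinal.{u}) :
    avoidingSeq W pick ξ = pick (⋃ ζ ≤ ξ, W (avoidingSeq W pick '' Iio ζ)) := by
  rw [avoidingSeq]
  simp [image_eq_range, iUnion_subtype]

theorem avoidingSeq_spec {α : Type u} {μ : Cardinal.{u}} (hμ : ℵ₀ ≤ μ) {𝒰 : Set (Set α)}
    {H : Set α} {W : Set α → Set (Set α)} {pick : Set (Set α) → α} (hW𝒰 : ∀ D, W D ⊆ 𝒰)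
    (hWμ : ∀ D, #(W D) ≤ μ) (hpick : ∀ 𝒱 ⊆ 𝒰, #𝒱 ≤ μ → pick 𝒱 ∈ H \ ⋃₀ 𝒱)
    {ξ : Ordinal.{u}} (hξ : ξ < (succ μ).ord) :
    avoidingSeq W pick ξ ∈ H ∧
      ∀ ζ ≤ ξ, avoidingSeq W pick ξ ∉ ⋃₀ W (avoidingSeq W pick '' Iio ζ) := by
  set y := avoidingSeq W pick
  have hξμ : (succ ξ).card ≤ μ :=
    lt_succ_iff.1 (lt_ord.1 ((isSuccLimit_ord (hμ.trans (le_succ μ))).succ_lt hξ))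
  have h𝒲μ : #(⋃ ζ ≤ ξ, W (y '' Iio ζ)) ≤ μ := by
    have h𝒲 : (⋃ ζ ≤ ξ, W (y '' Iio ζ)) = ⋃ ζ < succ ξ, W (y '' Iio ζ) := by
      simp only [lt_succ_iff]
    rw [h𝒲]
    exact mk_biUnion_le_of_le hξμ hμ _ fun ζ _ => hWμ _
  obtain ⟨hyH, hy𝒲⟩ := avoidingSeq_eq W pick ξ ▸ hpick _ (iUnion₂_subset fun ζ _ => hW𝒰 _) h𝒲μ
  exact ⟨hyH, fun ζ hζ hmem => hy𝒲 (sUnion_mono (subset_iUnion₂ ζ hζ) hmem)⟩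

section Topology

variable {X : Type u} [TopologicalSpace X] {μ : Cardinal.{u}}

def muLimits (μ : Cardinal.{u}) (B : Set X) : Set X :=
  {p | ∃ (ι : Type u) (_ : LinearOrder ι) (x : ι → X), #ι ≤ μ ∧ range x ⊆ B ∧
    ∀ U ∈ 𝓝 p, ∃ i, ∀ j, i ≤ j → x j ∈ U}

theorem muLimits_mono : Monotone (muLimits (X := X) μ) := by
  rintro B C hBC p ⟨ι, _, x, hι, hxB, hx⟩
  exact ⟨ι, _, x, hι, hxB.trans hBC, hx⟩

theorem muLimits_subset_closure (B : Set X) : muLimits μ B ⊆ closure B := by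
  rintro p ⟨ι, _, x, -, hxB, hx⟩
  refine mem_closure_iff_nhds.2 fun U hU => ?_
  obtain ⟨i, hi⟩ := hx U hU
  exact ⟨x i, hi i le_rfl, hxB (mem_range_self i)⟩

theorem exists_subset_of_mem_muLimits {B : Set X} {p : X} (hp : p ∈ muLimits μ B) :
    ∃ E ⊆ B, #E ≤ μ ∧ p ∈ muLimits μ E := by
  obtain ⟨ι, _, x, hι, hxB, hx⟩ := hp
  exact ⟨range x, hxB, mk_range_le.trans hι, ι, _, x, hι, subset_rfl, hx⟩

theorem MuSequential.isClosed_of_muLimits_subset (hseq : MuSequential μ X) {B : Set X}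
    (hB : muLimits μ B ⊆ B) : IsClosed B := by
  by_contra hBc
  obtain ⟨η, -, hη, x, p, hpB, hxB, hx⟩ := hseq B hBc
  refine hpB (hB ⟨η.ToType, inferInstance, x ∘ ToType.mk.symm, by rwa [mk_toType], ?_,
    fun U hU => ?_⟩)
  · rintro _ ⟨i, rfl⟩
    exact hxB _
  · obtain ⟨β, hβ⟩ := hx U hU
    exact ⟨ToType.mk β, fun j hj => hβ _ (by simpa using ToType.mk.symm.monotone hj)⟩

theorem MuSequential.isClosed_biUnion (hseq : MuSequential μ X) {Λ : Ordinal.{u}}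
    (hΛ : μ < Λ.cof) {S : Ordinal.{u} → Set X} (hS : Monotone S)
    (hSc : ∀ β, IsClosed (S β)) : IsClosed (⋃ β < Λ, S β) := by
  refine hseq.isClosed_of_muLimits_subset fun p hp => ?_
  obtain ⟨E, hES, hEμ, hpE⟩ := exists_subset_of_mem_muLimits hp
  obtain ⟨γ, hγ, hEγ⟩ := exists_lt_subset_of_subset_biUnion hS (hEμ.trans_lt hΛ) hES
  have hpγ : p ∈ S γ := (hSc γ).closure_subset (muLimits_subset_closure _ (muLimits_mono hEγ hpE))
  exact mem_biUnion hγ hpγ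

theorem eq_of_forall_nhds_exists_subset [T2Space X] {T : Set (Set X)}
    (hT : ∀ t ∈ T, t.Nonempty) (hchain : IsChain (· ⊆ ·) T) {p q : X}
    (hp : ∀ U ∈ 𝓝 p, ∃ t ∈ T, t ⊆ U) (hq : ∀ U ∈ 𝓝 q, ∃ t ∈ T, t ⊆ U) : p = q := by
  by_contra hpq
  obtain ⟨U, hU, V, hV, hUV⟩ := Filter.disjoint_iff.1 (disjoint_nhds_nhds.2 hpq)
  obtain ⟨t, ht, htU⟩ := hp U hU
  obtain ⟨s, hs, hsV⟩ := hq V hV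
  rcases hchain.total ht hs with hts | hst
  · obtain ⟨z, hz⟩ := hT t ht
    exact disjoint_left.1 hUV (htU hz) (hsV (hts hz))
  · obtain ⟨z, hz⟩ := hT s hs
    exact disjoint_left.1 hUV (htU (hst hz)) (hsV hz)

/-- Witnessed by the tails of a sequence converging to `p`. -/
theorem exists_chain_of_mem_muLimits {B : Set X} {p : X} (hp : p ∈ muLimits μ B) :
    ∃ T ∈ {T : Set (Set X) | T ⊆ {E | E ⊆ B ∧ #E ≤ μ} ∧ #T ≤ μ},
      (∀ t ∈ T, t.Nonempty) ∧ IsChain (· ⊆ ·) T ∧ ∀ U ∈ 𝓝 p, ∃ t ∈ T, t ⊆ U := by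
  obtain ⟨ι, _, x, hι, hxB, hx⟩ := hp
  have htail : Antitone fun i => x '' Ici i := fun i j hij => image_mono (Ici_subset_Ici.2 hij)
  refine ⟨range fun i => x '' Ici i, ⟨?_, mk_range_le.trans hι⟩, ?_, htail.isChain_range,
    fun U hU => ?_⟩
  · rintro _ ⟨i, rfl⟩
    exact ⟨(image_subset_range _ _).trans hxB, mk_image_le.trans ((mk_set_le _).trans hι)⟩
  · rintro _ ⟨i, rfl⟩
    exact ⟨x i, mem_image_of_mem x self_mem_Ici⟩
  · obtain ⟨i, hi⟩ := hx U hU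
    exact ⟨_, mem_range_self i, image_subset_iff.2 hi⟩

theorem mk_muLimits_le [T2Space X] (hμ : ℵ₀ ≤ μ) {B : Set X} (hB : #B ≤ 2 ^ μ) :
    #(muLimits μ B) ≤ 2 ^ μ := by
  choose T hT hTne hTchain hTp using fun p : muLimits μ B => exists_chain_of_mem_muLimits p.2
  have hinj : Function.Injective fun p => (⟨T p, hT p⟩ : {T : Set (Set X) |
      T ⊆ {E | E ⊆ B ∧ #E ≤ μ} ∧ #T ≤ μ}) := fun p q hpq => by
    have hpq : T p = T q := congrArg Subtype.val hpq
    exact Subtype.ext <| eq_of_forall_nhds_exists_subset (hTne p) (hTchain p) (hTp p)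
      (hpq ▸ hTp q)
  exact (mk_le_of_injective hinj).trans
    (mk_bounded_subset_le_two_pow hμ (mk_bounded_subset_le_two_pow hμ hB))

def LindelofNumberLE (μ : Cardinal.{u}) (Y : Set X) : Prop :=
  ∀ 𝒰 : Set (Set X), (∀ U ∈ 𝒰, IsOpen U) → Y ⊆ ⋃₀ 𝒰 → ∃ 𝒱 ⊆ 𝒰, #𝒱 ≤ μ ∧ Y ⊆ ⋃₀ 𝒱

theorem LindelofNumberLE.exists_lt_subset {Y : Set X} (hY : LindelofNumberLE μ Y)
    {Λ : Ordinal.{u}} (hΛ : μ < Λ.cof) {O : Ordinal.{u} → Set X} (hO : Monotone O)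
    (hOo : ∀ β, IsOpen (O β)) (hYO : Y ⊆ ⋃ β < Λ, O β) : ∃ γ < Λ, Y ⊆ O γ := by
  obtain ⟨𝒱, h𝒱, h𝒱μ, hY𝒱⟩ := hY (O '' Iio Λ) (by rintro _ ⟨β, -, rfl⟩; exact hOo β)
    (by simpa [sUnion_image] using hYO)
  choose β hβΛ hβ using fun V : 𝒱 => h𝒱 V.2
  refine ⟨⨆ V, β V, iSup_lt_of_lt_cof (h𝒱μ.trans_lt hΛ) hβΛ, hY𝒱.trans ?_⟩
  rintro z ⟨V, hV, hzV⟩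
  have hzβ : z ∈ O (β ⟨V, hV⟩) := by rwa [hβ ⟨V, hV⟩]
  exact hO (Ordinal.le_iSup β ⟨V, hV⟩) hzβ

def IsFreeSeq (y : Ordinal.{u} → X) (Λ : Ordinal.{u}) : Prop :=
  InjOn y (Iio Λ) ∧ ∀ β < Λ, Disjoint (closure (y '' Iio β)) (closure (y '' Ico β Λ))

theorem IsFreeSeq.isFreeSet {y : Ordinal.{u} → X} {Λ : Ordinal.{u}} (hy : IsFreeSeq y Λ) :
    IsFreeSet (y '' Iio Λ) := by
  refine ⟨Λ, fun δ => y δ, hy.1.injective, (image_eq_range y (Iio Λ)).symm, fun β => ?_⟩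
  have hinit : (fun δ : Iio Λ => y δ) '' {α | (α : Ordinal) < β} = y '' Iio β := by
    ext z
    constructor
    · rintro ⟨δ, hδ, rfl⟩
      exact ⟨δ, hδ, rfl⟩
    · rintro ⟨δ, hδ, rfl⟩
      exact ⟨⟨δ, mem_Iio.2 (lt_trans hδ β.2)⟩, hδ, rfl⟩
  have htail : (fun δ : Iio Λ => y δ) '' {α | (β : Ordinal) ≤ α} = y '' Ico β Λ := by
    ext z
    constructor
    · rintro ⟨δ, hδ, rfl⟩
      exact ⟨δ, ⟨hδ, δ.2⟩, rfl⟩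
    · rintro ⟨δ, hδ, rfl⟩
      exact ⟨⟨δ, hδ.2⟩, hδ.1, rfl⟩
  rw [hinit, htail]
  exact hy.2 β β.2

theorem isFreeSeq_of_closure_subset {y : Ordinal.{u} → X} {Λ : Ordinal.{u}}
    (O : Ordinal.{u} → Set X) (hO : ∀ β, IsOpen (O β))
    (hy : ∀ β ζ, β ≤ ζ → ζ < Λ → y ζ ∉ O β) (hcl : ∀ β < Λ, closure (y '' Iio β) ⊆ O β) :
    IsFreeSeq y Λ := by
  refine ⟨fun δ hδ δ' hδ' hyy => ?_, fun β hβ => ?_⟩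
  · by_contra hne
    wlog hlt : δ < δ' generalizing δ δ'
    · exact this δ' hδ' δ hδ hyy.symm (Ne.symm hne) ((Ne.symm hne).lt_of_le (not_lt.1 hlt))
    have hsucc : succ δ ≤ δ' := succ_le_of_lt hlt
    have hyδ : y δ ∈ O (succ δ) :=
      hcl _ (hsucc.trans_lt hδ') (subset_closure (mem_image_of_mem y (lt_succ δ)))
    exact hy _ δ' hsucc hδ' (hyy ▸ hyδ)
  · refine disjoint_of_subset (hcl β hβ) (closure_minimal ?_ (hO β).isClosed_compl)
      disjoint_compl_right
    rintro _ ⟨ζ, hζ, rfl⟩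
    exact hy β ζ hζ.1 hζ.2

theorem isFreeSeq_of_forall_isFreeSeq {y : Ordinal.{u} → X} {Λ : Ordinal.{u}}
    (O : Ordinal.{u} → Set X) (hO : ∀ β, IsOpen (O β))
    (hy : ∀ β ζ, β ≤ ζ → ζ < Λ → y ζ ∉ O β)
    (hcl : ∀ β < Λ, IsFreeSeq y β → closure (y '' Iio β) ⊆ O β) : IsFreeSeq y Λ := by
  induction Λ using WellFoundedLT.induction with
  | ind Λ IH =>
    refine isFreeSeq_of_closure_subset O hO hy fun β hβ => hcl β hβ (IH β hβ ?_ ?_)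
    · exact fun β' ζ hβ'ζ hζ => hy β' ζ hβ'ζ (hζ.trans hβ)
    · exact fun β' hβ' => hcl β' (hβ'.trans hβ)

theorem IsFreeSeq.not_lindelofNumberLE_closure (hμ : ℵ₀ ≤ μ) (hseq : MuSequential μ X)
    {Λ : Ordinal.{u}} (hΛ : μ < Λ.cof) {y : Ordinal.{u} → X} (hy : IsFreeSeq y Λ) :
    ¬ LindelofNumberLE μ (closure (y '' Iio Λ)) := by
  intro hL
  have hlim : IsSuccLimit Λ := one_lt_cof_iff.1 (one_lt_aleph0.trans_le (hμ.trans hΛ.le))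
  have hinit : Monotone fun β => closure (y '' Iio β) := fun β γ h =>
    closure_mono (image_mono (Iio_subset_Iio h))
  have hD : closure (y '' Iio Λ) ⊆ ⋃ β < Λ, closure (y '' Iio β) :=
    (hseq.isClosed_biUnion hΛ hinit fun _ => isClosed_closure).closure_subset_iff.2 <| by
      rintro _ ⟨α, hα, rfl⟩
      exact mem_biUnion (hlim.succ_lt hα) (subset_closure (mem_image_of_mem y (lt_succ α)))
  have hcov : closure (y '' Iio Λ) ⊆ ⋃ β < Λ, (closure (y '' Ico β Λ))ᶜ :=
    hD.trans (iUnion₂_mono fun β hβ => (hy.2 β hβ).subset_compl_right)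
  obtain ⟨γ, hγ, hsub⟩ := hL.exists_lt_subset hΛ
    (fun β γ h => compl_subset_compl.2 (closure_mono (image_mono (Ico_subset_Ico_left h))))
    (fun β => isClosed_closure.isOpen_compl) hcov
  exact hsub (subset_closure (mem_image_of_mem y hγ)) (subset_closure ⟨γ, ⟨le_rfl, hγ⟩, rfl⟩)

theorem MuSequential.lindelofNumberLE_of_isClosed (hμ : ℵ₀ ≤ μ) (hseq : MuSequential μ X)
    (hfree : ∀ D : Set X, IsFreeSet D → LindelofNumberLE μ (closure D)) {H : Set X}
    (hH : IsClosed H) : LindelofNumberLE μ H := by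
  intro 𝒰 h𝒰 hH𝒰
  by_contra! hsmall
  set Λ := (succ μ).ord
  have hΛ : μ < Λ.cof := by rw [(isRegular_succ hμ).cof_ord]; exact lt_succ μ
  have hW : ∀ D : Set X, ∃ 𝒱 ⊆ 𝒰, #𝒱 ≤ μ ∧ (IsFreeSet D → D ⊆ H → closure D ⊆ ⋃₀ 𝒱) := by
    intro D
    by_cases hD : IsFreeSet D ∧ D ⊆ H
    · obtain ⟨𝒱, h𝒱𝒰, h𝒱μ, hD𝒱⟩ :=
        hfree D hD.1 𝒰 h𝒰 ((hH.closure_subset_iff.2 hD.2).trans hH𝒰)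
      exact ⟨𝒱, h𝒱𝒰, h𝒱μ, fun _ _ => hD𝒱⟩
    · exact ⟨∅, empty_subset _, by simp, fun h h' => absurd ⟨h, h'⟩ hD⟩
  choose W hW𝒰 hWμ hWcov using hW
  have hpick : ∀ 𝒱 : Set (Set X), ∃ x, 𝒱 ⊆ 𝒰 → #𝒱 ≤ μ → x ∈ H \ ⋃₀ 𝒱 := by
    intro 𝒱
    by_cases h𝒱 : 𝒱 ⊆ 𝒰 ∧ #𝒱 ≤ μ
    · obtain ⟨x, hxH, hx𝒱⟩ := not_subset.1 (hsmall 𝒱 h𝒱.1 h𝒱.2)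
      exact ⟨x, fun _ _ => ⟨hxH, hx𝒱⟩⟩
    · obtain ⟨x, -⟩ := not_subset.1 (hsmall ∅ (empty_subset _) (by simp))
      exact ⟨x, fun h h' => absurd ⟨h, h'⟩ h𝒱⟩
  choose pick hpick using hpick
  set y : Ordinal.{u} → X := avoidingSeq W pick
  have hy : ∀ ξ < Λ, y ξ ∈ H ∧ ∀ ζ ≤ ξ, y ξ ∉ ⋃₀ W (y '' Iio ζ) := fun ξ hξ =>
    avoidingSeq_spec hμ hW𝒰 hWμ hpick hξ
  have hfreeseq : IsFreeSeq y Λ :=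
    isFreeSeq_of_forall_isFreeSeq (fun β => ⋃₀ W (y '' Iio β))
      (fun β => isOpen_sUnion fun U hU => h𝒰 U (hW𝒰 _ hU))
      (fun β ζ hβζ hζ => (hy ζ hζ).2 β hβζ)
      (fun β hβ hβfree => hWcov _ hβfree.isFreeSet
        (by rintro _ ⟨δ, hδ, rfl⟩; exact (hy δ (lt_trans hδ hβ)).1))
  exact hfreeseq.not_lindelofNumberLE_closure hμ hseq hΛ (hfree _ hfreeseq.isFreeSet)

theorem MuSequential.exists_isClosed_not_subset_sUnion [T2Space X] (hμ : ℵ₀ ≤ μ)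
    (hseq : MuSequential μ X) (𝔅 : X → Set (Set X)) (h𝔅 : ∀ x, #(𝔅 x) ≤ 2 ^ μ) :
    ∃ H : Set X, IsClosed H ∧ #H ≤ 2 ^ μ ∧
      ∀ 𝒱 ⊆ ⋃ x ∈ H, 𝔅 x, #𝒱 ≤ μ → (⋃₀ 𝒱)ᶜ.Nonempty → ¬ H ⊆ ⋃₀ 𝒱 := by
  let Q : Set X →o Set X := ⟨fun Y => muLimits μ Y ∪ escapePoints μ 𝔅 Y,
    fun _ _ h => union_subset_union (muLimits_mono h) (escapePoints_mono h)⟩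
  have hQμ (Y : Set X) (hY : #Y ≤ 2 ^ μ) : #(Q Y) ≤ 2 ^ μ :=
    calc #(Q Y) ≤ #(muLimits μ Y) + #(escapePoints μ 𝔅 Y) := mk_union_le _ _
      _ ≤ 2 ^ μ + 2 ^ μ := add_le_add (mk_muLimits_le hμ hY) (mk_escapePoints_le hμ h𝔅 hY)
      _ = 2 ^ μ := add_eq_self (hμ.trans (cantor μ).le)
  have hQsmall (Y : Set X) (x : X) (hx : x ∈ Q Y) : ∃ E ⊆ Y, #E ≤ μ ∧ x ∈ Q E := by
    rcases hx with hx | hx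
    · obtain ⟨E, hEY, hEμ, hxE⟩ := exists_subset_of_mem_muLimits hx
      exact ⟨E, hEY, hEμ, Or.inl hxE⟩
    · obtain ⟨E, hEY, hEμ, hxE⟩ := exists_subset_of_mem_escapePoints hx
      exact ⟨E, hEY, hEμ, Or.inr hxE⟩
  obtain ⟨H, hHμ, hQH⟩ := exists_mk_le_apply_subset hμ (cantor μ) Q hQμ hQsmall
  refine ⟨H, hseq.isClosed_of_muLimits_subset (subset_union_left.trans hQH), hHμ,
    fun 𝒱 h𝒱 h𝒱μ hne hH𝒱 => ?_⟩
  obtain ⟨x, hx, hx𝒱⟩ := exists_mem_escapePoints h𝒱 h𝒱μ hne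
  exact hx𝒱 (hH𝒱 (hQH (Or.inr hx)))

theorem LindelofNumberLE.eq_univ {H : Set X} (hH : LindelofNumberLE μ H)
    {𝔅 : X → Set (Set X)} (h𝔅open : ∀ x, ∀ U ∈ 𝔅 x, IsOpen U) (h𝔅 : ∀ x, ⋂₀ 𝔅 x = {x})
    (hH𝔅 : ∀ 𝒱 ⊆ ⋃ x ∈ H, 𝔅 x, #𝒱 ≤ μ → (⋃₀ 𝒱)ᶜ.Nonempty → ¬ H ⊆ ⋃₀ 𝒱) : H = Set.univ := by
  refine eq_univ_of_forall fun p => by_contra fun hp => ?_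
  let 𝒰 := {U ∈ ⋃ x ∈ H, 𝔅 x | p ∉ U}
  have hcover : H ⊆ ⋃₀ 𝒰 := by
    intro z hz
    have hpz : p ∉ ⋂₀ 𝔅 z := by
      rw [h𝔅 z]
      rintro rfl
      exact hp hz
    obtain ⟨U, hU, hpU⟩ : ∃ U ∈ 𝔅 z, p ∉ U := by simpa [mem_sInter] using hpz
    have hzU : z ∈ U := mem_sInter.1 ((h𝔅 z).symm ▸ mem_singleton z) U hU
    exact ⟨U, ⟨mem_biUnion hz hU, hpU⟩, hzU⟩
  have h𝒰open : ∀ U ∈ 𝒰, IsOpen U := fun U hU => by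
    obtain ⟨x, -, hUx⟩ := mem_iUnion₂.1 hU.1
    exact h𝔅open x U hUx
  obtain ⟨𝒱, h𝒱𝒰, h𝒱μ, hH𝒱⟩ := hH 𝒰 h𝒰open hcover
  exact hH𝔅 𝒱 (fun V hV => (h𝒱𝒰 hV).1) h𝒱μ ⟨p, fun ⟨V, hV, hpV⟩ => (h𝒱𝒰 hV).2 hpV⟩ hH𝒱

end Topology

theorem muSequential_card_le_two_pow
    {X : Type u} [TopologicalSpace X] [T2Space X] (μ : Cardinal.{u})
    (hμ : ℵ₀ ≤ μ)
    (hseq : MuSequential μ X)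
    (hψ : ∀ x : X, ∃ 𝒰 : Set (Set X), #𝒰 ≤ 2 ^ μ ∧ (∀ U ∈ 𝒰, IsOpen U) ∧
      ⋂₀ 𝒰 = {x})
    (hfree : ∀ D : Set X, IsFreeSet D →
      ∀ 𝒰 : Set (Set X), (∀ U ∈ 𝒰, IsOpen U) → closure D ⊆ ⋃₀ 𝒰 →
        ∃ 𝒱 ⊆ 𝒰, #𝒱 ≤ μ ∧ closure D ⊆ ⋃₀ 𝒱) :
    #X ≤ 2 ^ μ := by
  choose 𝔅 h𝔅μ h𝔅open h𝔅 using hψ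
  obtain ⟨H, hHclosed, hHμ, hH⟩ := hseq.exists_isClosed_not_subset_sUnion hμ 𝔅 h𝔅μ
  have hHL : LindelofNumberLE μ H := hseq.lindelofNumberLE_of_isClosed hμ hfree hHclosed
  rwa [hHL.eq_univ h𝔅open h𝔅 hH, mk_univ] at hHμ
end

section
/- Let X be a Hausdorff (T2) sequential topological space such that every point of X is the intersection of at most 2^ℵ₀ open sets, and such that for every free set D ⊆ X the closure of D is Lindelöf. Then the cardinality of X is at most 2^ℵ₀ (the continuum). -/
/-!
A sequential space in which closures of free sets are Lindelöf is itself Lindelöf. Otherwise take an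
open cover with no countable subcover and choose, for `α < ω₁`, a point `x α` outside countable
subcovers of the closures of all initial segments `x '' Iio β`, `β ≤ α`. These open sets separate
each initial segment from the corresponding tail, so `x '' Iio ω₁` is free. A point adhering to all
of its tails exists by Lindelöfness, and by countable tightness it adheres to a countable, hence
bounded, initial segment, which the tails avoid.

In a Lindelöf sequential Hausdorff space where each point is an intersection of `≤ 𝔠` open sets,
close off under limits of sequences and under picking a point outside each countable union of these
open sets. The result `H` has size `≤ 𝔠` and is closed, hence Lindelöf. For `z ∉ H`, the open sets
around points of `H` that miss `z` have a countable subfamily covering `H`, and the point picked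
outside its union lies in `H`: a contradiction.
-/

open Cardinal Set Filter Topology

universe u

open scoped Ordinal

namespace Ordinal

theorem countable_Iio_of_lt_omega_one {o : Ordinal.{u}} (ho : o < ω₁) : (Iio o).Countable := by
  rw [← countable_coe_iff, ← mk_le_aleph0_iff, Cardinal.mk_Iio_ordinal,
    ← lift_aleph0.{u + 1, u}, Cardinal.lift_le, ← lt_aleph_one_iff, ← lt_omega_iff_card_lt]
  exact ho

theorem exists_lt_omega_one_of_countable {s : Set Ordinal.{u}} (hs : s.Countable)
    (h : ∀ o ∈ s, o < ω₁) : ∃ δ < ω₁, ∀ o ∈ s, o < δ := by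
  have : Countable s := hs.to_subtype
  refine ⟨⨆ o : s, Order.succ (o : Ordinal),
    iSup_lt_omega_one fun o ↦ (isSuccLimit_omega 1).succ_lt (h o o.2), fun o ho ↦ ?_⟩
  exact (Order.lt_succ o).trans_le
    (Ordinal.le_iSup (fun o : s ↦ Order.succ (o : Ordinal)) ⟨o, ho⟩)

theorem card_le_continuum_of_le_omega_one {o : Ordinal.{u}} (ho : o ≤ ω₁) : o.card ≤ 𝔠 := by
  refine (card_le_of_le_ord ?_).trans aleph_one_le_continuum
  rwa [ord_aleph]

theorem exists_forall_eq_rec {β : Type*} [Nonempty β]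
    (g : Ordinal.{u} → (Ordinal.{u} → β) → β)
    (hg : ∀ a f f', EqOn f f' (Iio a) → g a f = g a f') :
    ∃ x : Ordinal.{u} → β, ∀ a, x a = g a x := by
  classical
  refine ⟨wellFounded_lt.fix fun a ih ↦
    g a fun b ↦ if h : b < a then ih b h else Classical.arbitrary β, fun a ↦ ?_⟩
  rw [WellFounded.fix_eq]
  exact hg _ _ _ fun b hb ↦ dif_pos hb

end Ordinal

theorem mk_biUnion_countable_subsets_le {α β : Type u} {F : Set α → Set β} {S : Set α}
    (hS : #S ≤ 𝔠) (hF : ∀ C : Set α, C.Countable → #(F C) ≤ 𝔠) :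
    #(⋃ (C : Set α) (_ : C.Countable ∧ C ⊆ S), F C) ≤ 𝔠 := by
  have hsubsets : #{C : Set α // C ⊆ S ∧ #C ≤ ℵ₀} ≤ 𝔠 :=
    calc _ ≤ max #S ℵ₀ ^ ℵ₀ := mk_bounded_subset_le S ℵ₀
      _ ≤ 𝔠 ^ ℵ₀ := power_le_power_right (max_le hS aleph0_le_continuum)
      _ = 𝔠 := continuum_power_aleph0
  have hunion : (⋃ (C : Set α) (_ : C.Countable ∧ C ⊆ S), F C)
      = ⋃ C : {C : Set α // C ⊆ S ∧ #C ≤ ℵ₀}, F C := by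
    ext x
    simp [and_comm]
  rw [hunion]
  calc _ ≤ _ := mk_iUnion_le _
    _ ≤ 𝔠 * 𝔠 := mul_le_mul' hsubsets
        (ciSup_le' fun C ↦ hF C (le_aleph0_iff_set_countable.1 C.2.2))
    _ = 𝔠 := mul_eq_self aleph0_le_continuum

section CountableClosure

variable {α : Type u} (F : Set α → Set α)

def countableClosureRec (i : Ordinal.{u}) : Set α :=
  ⋃ (C : Set α) (_ : C.Countable ∧ C ⊆ ⋃ j < i, countableClosureRec j), F C
termination_by i

variable {F}

theorem mk_countableClosureRec_le (hF : ∀ C : Set α, C.Countable → #(F C) ≤ 𝔠) :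
    ∀ i ≤ ω₁, #(countableClosureRec F i) ≤ 𝔠 := by
  intro i
  induction i using WellFoundedLT.induction with
  | _ i IH =>
    intro hi
    rw [countableClosureRec]
    refine mk_biUnion_countable_subsets_le ?_ hF
    exact mk_biUnion_le_of_le (Ordinal.card_le_continuum_of_le_omega_one hi)
      aleph0_le_continuum _ fun j hj ↦ IH j hj (hj.le.trans hi)

theorem exists_mk_le_continuum_forall_countable_subset
    (hF : ∀ C : Set α, C.Countable → #(F C) ≤ 𝔠) :
    ∃ H : Set α, #H ≤ 𝔠 ∧ ∀ C ⊆ H, C.Countable → F C ⊆ H := by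
  refine ⟨⋃ i < ω₁, countableClosureRec F i, ?_, fun C hCH hC ↦ ?_⟩
  · exact mk_biUnion_le_of_le (Ordinal.card_le_continuum_of_le_omega_one le_rfl)
      aleph0_le_continuum _ fun i hi ↦ mk_countableClosureRec_le hF i hi.le
  · have hstage : ∀ c ∈ C, ∃ i < ω₁, c ∈ countableClosureRec F i := by
      simpa only [subset_def, mem_iUnion₂, exists_prop] using hCH
    choose! stage hstage_lt hmem using hstage
    obtain ⟨δ, hδ, hδC⟩ := Ordinal.exists_lt_omega_one_of_countable (hC.image stage)
      (forall_mem_image.2 hstage_lt)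
    refine subset_iUnion₂_of_subset δ hδ ?_
    rw [countableClosureRec]
    refine subset_iUnion₂_of_subset C ⟨hC, fun c hc ↦ ?_⟩ subset_rfl
    exact mem_iUnion₂.2 ⟨stage c, hδC _ (mem_image_of_mem _ hc), hmem c hc⟩

end CountableClosure

theorem IsLindelof.exists_forall_mem_of_antitone {X : Type*} [TopologicalSpace X] {K : Set X}
    (hK : IsLindelof K) {F : Ordinal.{u} → Set X} (hF : ∀ δ, IsClosed (F δ))
    (hanti : Antitone F) (hne : ∀ δ < ω₁, (K ∩ F δ).Nonempty) :
    ∃ y ∈ K, ∀ δ < ω₁, y ∈ F δ := by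
  by_contra! h
  obtain ⟨u, hu, hKu⟩ := hK.elim_countable_subfamily_closed (fun δ : Iio ω₁ ↦ F δ)
    (fun δ ↦ hF δ) (eq_empty_of_forall_notMem fun y ⟨hyK, hyF⟩ ↦ by
      obtain ⟨δ, hδ, hyδ⟩ := h y hyK
      exact hyδ (mem_iInter.1 hyF ⟨δ, hδ⟩))
  obtain ⟨δ, hδ, hδu⟩ := Ordinal.exists_lt_omega_one_of_countable (hu.image Subtype.val)
    (forall_mem_image.2 fun i _ ↦ i.2)
  obtain ⟨y, hyK, hyδ⟩ := hne δ hδ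
  refine (eq_empty_iff_forall_notMem.1 hKu) y ⟨hyK, mem_iInter₂.2 fun i hi ↦ ?_⟩
  exact hanti (hδu _ (mem_image_of_mem _ hi)).le hyδ

section Sequential

variable {X : Type u} [TopologicalSpace X]

theorem SequentialSpace.exists_countable_subset_of_mem_closure [SequentialSpace X] {A : Set X}
    {y : X} (hy : y ∈ closure A) : ∃ B ⊆ A, B.Countable ∧ y ∈ closure B := by
  set T := {w : X | ∃ B ⊆ A, B.Countable ∧ w ∈ closure B}
  have hT : IsSeqClosed T := by
    intro u p hu hp
    choose B hBA hBc hBu using hu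
    refine ⟨⋃ n, B n, iUnion_subset hBA, countable_iUnion hBc, ?_⟩
    exact isClosed_closure.mem_of_tendsto hp
      (Eventually.of_forall fun n ↦ closure_mono (subset_iUnion B n) (hBu n))
  have hAT : A ⊆ T := fun a ha ↦
    ⟨{a}, singleton_subset_iff.2 ha, countable_singleton a, subset_closure rfl⟩
  exact closure_minimal hAT hT.isClosed hy

def seqLimits (C : Set X) : Set X :=
  {y | ∃ u : ℕ → X, (∀ n, u n ∈ C) ∧ Tendsto u atTop (𝓝 y)}

theorem mk_seqLimits_le [T2Space X] (C : Set X) : #(seqLimits C) ≤ #C ^ ℵ₀ := by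
  have hseq : ∀ y : seqLimits C, ∃ u : ℕ → C, Tendsto (fun n ↦ (u n : X)) atTop (𝓝 y.1) := by
    rintro ⟨y, u, hu, hlim⟩
    exact ⟨fun n ↦ ⟨u n, hu n⟩, hlim⟩
  choose seq hseq using hseq
  have hinj : Function.Injective seq := fun y y' h ↦
    Subtype.ext (tendsto_nhds_unique (hseq y) (h ▸ hseq y'))
  simpa using mk_le_of_injective hinj

end Sequential

section FreeSequence

variable {X : Type u} [TopologicalSpace X] {x : Ordinal.{u} → X} {W : Ordinal.{u} → Set X}

theorem isFreeSet_image_Iio {δ : Ordinal.{u}} (hW : ∀ β, IsOpen (W β))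
    (hcl : ∀ β < δ, closure (x '' Iio β) ⊆ W β) (hout : ∀ β o, β ≤ o → o < δ → x o ∉ W β) :
    IsFreeSet (x '' Iio δ) := by
  have hinj : InjOn x (Iio δ) := by
    have hne : ∀ a b, a < b → b < δ → x a ≠ x b := fun a b hab hb hxab ↦
      hout (Order.succ a) b (Order.succ_le_of_lt hab) hb <| hxab ▸
        hcl _ ((Order.succ_le_of_lt hab).trans_lt hb) (subset_closure ⟨a, Order.lt_succ a, rfl⟩)
    intro a ha b hb hxab
    by_contra hab
    rcases lt_or_gt_of_ne hab with hab | hab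
    exacts [hne a b hab hb hxab, hne b a hab ha hxab.symm]
  refine ⟨δ, fun b ↦ x b, hinj.injective, (image_eq_range x (Iio δ)).symm, fun β ↦ ?_⟩
  have hinit : (fun b : Iio δ ↦ x b) '' {b | b < (β : Ordinal)} ⊆ x '' Iio β := by
    rintro _ ⟨b, hb, rfl⟩
    exact ⟨b, hb, rfl⟩
  have htail : (fun b : Iio δ ↦ x b) '' {b | (β : Ordinal) ≤ b} ⊆ (W β)ᶜ := by
    rintro _ ⟨b, hb, rfl⟩
    exact hout β b hb b.2
  exact (disjoint_compl_right.mono (hcl β β.2)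
    (closure_minimal htail (hW β).isClosed_compl)).mono_left (closure_mono hinit)

theorem not_isLindelof_closure_image_Iio_omega_one [SequentialSpace X] (hW : ∀ β, IsOpen (W β))
    (hcl : ∀ β < ω₁, closure (x '' Iio β) ⊆ W β) (hout : ∀ β o, β ≤ o → o < ω₁ → x o ∉ W β) :
    ¬ IsLindelof (closure (x '' Iio ω₁)) := by
  intro hD
  obtain ⟨y, hyD, hy⟩ := hD.exists_forall_mem_of_antitone
    (F := fun δ ↦ closure (x '' Ico δ ω₁)) (fun _ ↦ isClosed_closure)
    (fun _ _ h ↦ closure_mono (image_mono (Ico_subset_Ico_left h))) fun δ hδ ↦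
      ⟨x δ, subset_closure (mem_image_of_mem x hδ),
        subset_closure (mem_image_of_mem x ⟨le_rfl, hδ⟩)⟩
  obtain ⟨B, hBD, hBc, hyB⟩ := SequentialSpace.exists_countable_subset_of_mem_closure hyD
  choose! idx hidx_lt hidx using fun b (hb : b ∈ B) ↦ hBD hb
  obtain ⟨δ, hδ, hδB⟩ := Ordinal.exists_lt_omega_one_of_countable (hBc.image idx)
    (forall_mem_image.2 hidx_lt)
  have hBδ : B ⊆ x '' Iio δ := fun b hb ↦ ⟨idx b, hδB _ (mem_image_of_mem _ hb), hidx b hb⟩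
  have htail : x '' Ico δ ω₁ ⊆ (W δ)ᶜ := by
    rintro _ ⟨o, ⟨hδo, ho⟩, rfl⟩
    exact hout δ o hδo ho
  exact closure_minimal htail (hW δ).isClosed_compl (hy δ hδ) (hcl δ hδ (closure_mono hBδ hyB))

end FreeSequence

theorem lindelofSpace_of_isLindelof_closure_isFreeSet {X : Type u} [TopologicalSpace X]
    [SequentialSpace X] (hfree : ∀ D : Set X, IsFreeSet D → IsLindelof (closure D)) :
    LindelofSpace X := by
  refine isLindelof_univ_iff.1 (isLindelof_of_countable_subcover fun {ι} U hUo hcover ↦ ?_)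
  by_contra! hno
  have : Nonempty X := by
    by_contra! hX
    exact hno ∅ countable_empty (by simp)
  have hcov : ∀ A : Set X, ∃ t : Set ι, t.Countable ∧
      (IsLindelof (closure A) → closure A ⊆ ⋃ i ∈ t, U i) := by
    intro A
    by_cases hA : IsLindelof (closure A)
    · obtain ⟨t, ht, hAt⟩ := hA.elim_countable_subcover U hUo ((subset_univ _).trans hcover)
      exact ⟨t, ht, fun _ ↦ hAt⟩
    · exact ⟨∅, countable_empty, fun h ↦ absurd h hA⟩
  choose cov hcov_countable hcov_closure using hcov
  let W (A : Set X) : Set X := ⋃ i ∈ cov A, U i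
  have hW : ∀ A, IsOpen (W A) := fun A ↦ isOpen_biUnion fun i _ ↦ hUo i
  obtain ⟨x, hx⟩ := Ordinal.exists_forall_eq_rec
    (fun a f ↦ Classical.epsilon (· ∉ ⋃ β ∈ Iic a, W (f '' Iio β))) fun a f f' hff' ↦ by
      rw [iUnion₂_congr fun β (hβ : β ∈ Iic a) ↦ by
        rw [(hff'.mono (Iio_subset_Iio hβ)).image_eq]]
  have hout : ∀ β o, β ≤ o → o < ω₁ → x o ∉ W (x '' Iio β) := by
    intro β o hβo ho
    have hIic : (Iic o).Countable := by
      rw [← Order.Iio_succ]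
      exact Ordinal.countable_Iio_of_lt_omega_one ((isSuccLimit_omega 1).succ_lt ho)
    obtain ⟨p, -, hp⟩ :=
      not_subset.1 (hno _ (hIic.biUnion fun β _ ↦ hcov_countable (x '' Iio β)))
    have hxo : x o ∉ ⋃ β ∈ Iic o, W (x '' Iio β) := by
      refine hx o ▸ Classical.epsilon_spec (p := (· ∉ ⋃ β ∈ Iic o, W (x '' Iio β))) ⟨p, ?_⟩
      simp only [W, mem_iUnion, exists_prop, not_exists, not_and] at hp ⊢
      exact fun β hβ i hi ↦ hp i ⟨β, hβ, hi⟩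
    exact fun h ↦ hxo (mem_biUnion hβo h)
  have hcl : ∀ β < ω₁, closure (x '' Iio β) ⊆ W (x '' Iio β) := by
    intro β
    induction β using WellFoundedLT.induction with
    | _ β IH =>
      intro hβ
      exact hcov_closure _ <| hfree _ <| isFreeSet_image_Iio (fun γ ↦ hW (x '' Iio γ))
        (fun γ hγ ↦ IH γ hγ (hγ.trans hβ)) fun γ o hγo ho ↦ hout γ o hγo (ho.trans hβ)
  exact not_isLindelof_closure_image_Iio_omega_one (fun γ ↦ hW (x '' Iio γ)) hcl hout
    (hfree _ (isFreeSet_image_Iio (fun γ ↦ hW (x '' Iio γ)) hcl hout))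

theorem exists_isClosed_mk_le_continuum_forall_sUnion_eq_univ {X : Type u} [TopologicalSpace X]
    [T2Space X] [SequentialSpace X] [Nonempty X] {𝒰 : X → Set (Set X)}
    (h𝒰 : ∀ x, #(𝒰 x) ≤ 𝔠) :
    ∃ H : Set X, IsClosed H ∧ #H ≤ 𝔠 ∧ ∀ 𝒱 : Set (Set X), 𝒱.Countable →
      𝒱 ⊆ ⋃ x ∈ H, 𝒰 x → H ⊆ ⋃₀ 𝒱 → ⋃₀ 𝒱 = Set.univ := by
  let escape (𝒱 : Set (Set X)) : X := Classical.epsilon (· ∉ ⋃₀ 𝒱)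
  let F (C : Set X) : Set X := seqLimits C ∪
    ⋃ (𝒱 : Set (Set X)) (_ : 𝒱.Countable ∧ 𝒱 ⊆ ⋃ x ∈ C, 𝒰 x), {escape 𝒱}
  have hF : ∀ C : Set X, C.Countable → #(F C) ≤ 𝔠 := by
    intro C hC
    have hlim : #(seqLimits C) ≤ 𝔠 :=
      calc _ ≤ #C ^ ℵ₀ := mk_seqLimits_le C
        _ ≤ ℵ₀ ^ ℵ₀ := power_le_power_right hC.le_aleph0
        _ = 𝔠 := by rw [aleph0_power_aleph0]
    have h𝒰C : #(⋃ x ∈ C, 𝒰 x) ≤ 𝔠 :=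
      calc _ ≤ #C * ⨆ x : C, #(𝒰 x) := mk_biUnion_le _ _
        _ ≤ ℵ₀ * 𝔠 := mul_le_mul' hC.le_aleph0 (ciSup_le' fun x ↦ h𝒰 x)
        _ = 𝔠 := aleph0_mul_continuum
    have hesc := mk_biUnion_countable_subsets_le (F := fun 𝒱 ↦ ({escape 𝒱} : Set X)) h𝒰C
      fun 𝒱 _ ↦ by simpa using one_lt_aleph0.le.trans aleph0_le_continuum
    calc _ ≤ _ := mk_union_le _ _
      _ ≤ 𝔠 + 𝔠 := add_le_add hlim hesc
      _ = 𝔠 := add_eq_self aleph0_le_continuum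
  obtain ⟨H, hHcard, hHF⟩ := exists_mk_le_continuum_forall_countable_subset hF
  refine ⟨H, IsSeqClosed.isClosed fun u p hu hp ↦ ?_, hHcard, fun 𝒱 h𝒱c h𝒱H hH𝒱 ↦ ?_⟩
  · exact hHF (range u) (range_subset_iff.2 hu) (countable_range u)
      (mem_union_left _ ⟨u, fun n ↦ ⟨n, rfl⟩, hp⟩)
  choose! center hcenter_mem h𝒰center using fun V (hV : V ∈ 𝒱) ↦ mem_iUnion₂.1 (h𝒱H hV)
  have hesc : escape 𝒱 ∈ H := by
    refine hHF (center '' 𝒱) (forall_mem_image.2 hcenter_mem) (h𝒱c.image center)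
      (mem_union_right _ (mem_iUnion₂.2 ⟨𝒱, ⟨h𝒱c, fun V hV ↦ ?_⟩, rfl⟩))
    exact mem_biUnion (mem_image_of_mem center hV) (h𝒰center V hV)
  by_contra h𝒱
  obtain ⟨z, hz⟩ := (ne_univ_iff_exists_notMem _).1 h𝒱
  exact Classical.epsilon_spec (p := (· ∉ ⋃₀ 𝒱)) ⟨z, hz⟩ (hH𝒱 hesc)

theorem mk_le_continuum_of_lindelofSpace {X : Type u} [TopologicalSpace X] [T2Space X]
    [SequentialSpace X] [LindelofSpace X]
    (hψ : ∀ x : X, ∃ 𝒰 : Set (Set X), #𝒰 ≤ 𝔠 ∧ (∀ U ∈ 𝒰, IsOpen U) ∧ ⋂₀ 𝒰 = {x}) :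
    #X ≤ 𝔠 := by
  rcases isEmpty_or_nonempty X with _ | _
  · simp
  choose 𝒰 h𝒰card h𝒰open h𝒰inter using hψ
  obtain ⟨H, hHclosed, hHcard, hH⟩ := exists_isClosed_mk_le_continuum_forall_sUnion_eq_univ h𝒰card
  suffices hHuniv : H = Set.univ by rwa [← mk_univ, ← hHuniv]
  refine eq_univ_of_forall fun z ↦ by_contra fun hz ↦ ?_
  have hV : ∀ x ∈ H, ∃ V ∈ 𝒰 x, z ∉ V := by
    intro x hx
    by_contra! h
    have hzx : z ∈ ⋂₀ 𝒰 x := h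
    rw [h𝒰inter, mem_singleton_iff] at hzx
    exact hz (hzx ▸ hx)
  choose! V hV𝒰 hzV using hV
  have hxV : ∀ x ∈ H, x ∈ V x := fun x hx ↦
    (h𝒰inter x ▸ mem_singleton x : x ∈ ⋂₀ 𝒰 x) _ (hV𝒰 x hx)
  obtain ⟨r, hrc, hrH, hHr⟩ := hHclosed.isLindelof.elim_nhds_subcover V
    fun x hx ↦ (h𝒰open x _ (hV𝒰 x hx)).mem_nhds (hxV x hx)
  have hcover := hH (V '' r) (hrc.image V)
    (forall_mem_image.2 fun x hx ↦ mem_biUnion (hrH x hx) (hV𝒰 x (hrH x hx)))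
    (sUnion_image V r ▸ hHr)
  obtain ⟨_, ⟨x, hx, rfl⟩, hzVx⟩ := hcover ▸ mem_univ z
  exact hzV x (hrH x hx) hzVx

theorem sequential_card_le_continuum
    {X : Type u} [TopologicalSpace X] [T2Space X] [SequentialSpace X]
    (hψ : ∀ x : X, ∃ 𝒰 : Set (Set X), #𝒰 ≤ 2 ^ (ℵ₀ : Cardinal.{u}) ∧
      (∀ U ∈ 𝒰, IsOpen U) ∧ ⋂₀ 𝒰 = {x})
    (hfree : ∀ D : Set X, IsFreeSet D → IsLindelof (closure D)) :
    #X ≤ 2 ^ (ℵ₀ : Cardinal.{u}) := by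
  have := lindelofSpace_of_isLindelof_closure_isFreeSet hfree
  rw [two_power_aleph0] at hψ ⊢
  exact mk_le_continuum_of_lindelofSpace hψ
end

section
/- Let μ be an infinite cardinal and X a Hausdorff (T2) μ-sequential topological space. Then the tightness of X is at most μ: for every A ⊆ X and every x in the closure of A there is B ⊆ A with #B ≤ μ such that x is in the closure of B. -/
open Cardinal Set Filter Topology

/-!
The points lying in the closure of a subset of `A` of size at most `μ` form a set containing `A`
that is stable under the same operation, because a union of `μ` sets of size `μ` has size `μ`.
In a `μ`-sequential space such a set is closed, since the range of a convergent family of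
length at most `μ` is itself a small subset. Hence it contains the closure of `A`.
-/

def muClosure {X : Type u} [TopologicalSpace X] (μ : Cardinal.{u}) (A : Set X) : Set X :=
  {y | ∃ B ⊆ A, #B ≤ μ ∧ y ∈ closure B}

theorem Cardinal.mk_iUnion_le_of_le {α ι : Type u} {μ : Cardinal.{u}} (hμ : ℵ₀ ≤ μ)
    {f : ι → Set α} (hι : #ι ≤ μ) (hf : ∀ i, #(f i) ≤ μ) : #(⋃ i, f i) ≤ μ :=
  calc #(⋃ i, f i) ≤ #ι * ⨆ i, #(f i) := mk_iUnion_le f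
    _ ≤ μ * μ := mul_le_mul' hι (ciSup_le' hf)
    _ = μ := mul_eq_self hμ

section muClosure

variable {X : Type u} [TopologicalSpace X] {μ : Cardinal.{u}}

theorem subset_muClosure (hμ : 1 ≤ μ) (A : Set X) : A ⊆ muClosure μ A :=
  fun a ha => ⟨{a}, singleton_subset_iff.2 ha, by rwa [mk_singleton], subset_closure rfl⟩

theorem muClosure_muClosure_subset (hμ : ℵ₀ ≤ μ) (A : Set X) :
    muClosure μ (muClosure μ A) ⊆ muClosure μ A := by
  rintro y ⟨C, hCA, hC, hyC⟩
  choose B hBA hB hcB using fun c : C => hCA c.2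
  refine ⟨⋃ c, B c, iUnion_subset hBA, mk_iUnion_le_of_le hμ hC hB, ?_⟩
  have hC_sub : C ⊆ closure (⋃ c, B c) := fun c hc =>
    closure_mono (subset_iUnion B ⟨c, hc⟩) (hcB ⟨c, hc⟩)
  exact closure_minimal hC_sub isClosed_closure hyC

theorem MuSequential.isClosed_of_muClosure_subset (hseq : MuSequential μ X) {A : Set X}
    (hA : muClosure μ A ⊆ A) : IsClosed A := by
  by_contra hA_closed
  obtain ⟨η, -, hη, x, p, hpA, hxA, hconv⟩ := hseq A hA_closed
  refine hpA (hA ⟨range x, range_subset_iff.2 hxA, ?_, ?_⟩)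
  · rw [← Cardinal.lift_le.{u + 1}]
    calc lift.{u + 1} #(range x) ≤ lift.{u} #(Iio η) := mk_range_le_lift
      _ = lift.{u + 1} η.card := by rw [Cardinal.mk_Iio_ordinal, Cardinal.lift_lift]
      _ ≤ lift.{u + 1} μ := Cardinal.lift_le.2 hη
  · refine mem_closure_iff_nhds.2 fun U hU => ?_
    obtain ⟨β, hβ⟩ := hconv U hU
    exact ⟨x β, hβ β le_rfl, mem_range_self β⟩

theorem MuSequential.isClosed_muClosure (hseq : MuSequential μ X) (hμ : ℵ₀ ≤ μ)
    (A : Set X) : IsClosed (muClosure μ A) :=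
  hseq.isClosed_of_muClosure_subset (muClosure_muClosure_subset hμ A)

end muClosure

theorem muSequential_tightness_le_general
    {X : Type u} [TopologicalSpace X] (μ : Cardinal.{u})
    (hμ : ℵ₀ ≤ μ) (hseq : MuSequential μ X) :
    ∀ A : Set X, ∀ x ∈ closure A, ∃ B ⊆ A, #B ≤ μ ∧ x ∈ closure B := fun A =>
  closure_minimal (subset_muClosure (one_le_aleph0.trans hμ) A) (hseq.isClosed_muClosure hμ A)

theorem muSequential_tightness_le
    {X : Type u} [TopologicalSpace X] [T2Space X] (μ : Cardinal.{u})
    (hμ : ℵ₀ ≤ μ) (hseq : MuSequential μ X) :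
    ∀ A : Set X, ∀ x ∈ closure A, ∃ B ⊆ A, #B ≤ μ ∧ x ∈ closure B :=
  muSequential_tightness_le_general μ hμ hseq
end

section
/- Let X be a T1 topological space, μ an infinite cardinal, and H ⊆ X a closed set such that: the cardinality of H is at most 2^μ; every cover of H by open subsets of X has a subfamily of cardinality at most μ covering H; and every point x ∈ H is the intersection of at most 2^μ open subsets of X. Then there is a family of at most 2^μ open subsets of X whose intersection is exactly H. -/
open Cardinal Set Filter Topology

theorem psi_closed_le_two_pow
    {X : Type u} [TopologicalSpace X] [T1Space X] (μ : Cardinal.{u})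
    (hμ : ℵ₀ ≤ μ) (H : Set X) (hH : IsClosed H)
    (hcard : #H ≤ 2 ^ μ)
    (hLind : ∀ 𝒰 : Set (Set X), (∀ U ∈ 𝒰, IsOpen U) → H ⊆ ⋃₀ 𝒰 →
      ∃ 𝒱 ⊆ 𝒰, #𝒱 ≤ μ ∧ H ⊆ ⋃₀ 𝒱)
    (hψ : ∀ x ∈ H, ∃ 𝒰 : Set (Set X), #𝒰 ≤ 2 ^ μ ∧ (∀ U ∈ 𝒰, IsOpen U) ∧
      ⋂₀ 𝒰 = {x}) :
    ∃ 𝒰 : Set (Set X), #𝒰 ≤ 2 ^ μ ∧ (∀ U ∈ 𝒰, IsOpen U) ∧ ⋂₀ 𝒰 = H := by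
  choose f hf1 hf2 hf3 using hψ
  set 𝒲 : Set (Set X) := ⋃ (x : X) (hx : x ∈ H), f x hx with h𝒲
  have h𝒲open : ∀ U ∈ 𝒲, IsOpen U := by
    rintro U hU
    simp only [h𝒲, mem_iUnion] at hU
    obtain ⟨x, hx, hUx⟩ := hU
    exact hf2 x hx U hUx
  have h𝒲card : #𝒲 ≤ 2 ^ μ := by
    have : 𝒲 = ⋃ (x : H), f x.1 x.2 := by
      simp [h𝒲, iUnion_subtype]
    rw [this]
    refine (mk_iUnion_le _).trans ?_
    have h1 : ⨆ (x : H), #(f x.1 x.2) ≤ 2 ^ μ := ciSup_le' fun x => hf1 x.1 x.2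
    calc #H * ⨆ (x : H), #(f x.1 x.2) ≤ (2 ^ μ) * (2 ^ μ) :=
          mul_le_mul' hcard h1
      _ = 2 ^ μ := by
          rw [← power_add, add_eq_self hμ]
  set 𝒰 : Set (Set X) :=
    (fun 𝒱 => ⋃₀ 𝒱) '' { 𝒱 : Set (Set X) | 𝒱 ⊆ 𝒲 ∧ #𝒱 ≤ μ ∧ H ⊆ ⋃₀ 𝒱 } with h𝒰
  refine ⟨𝒰, ?_, ?_, ?_⟩
  · refine mk_image_le.trans ?_
    have := mk_bounded_subset_le 𝒲 μ
    have hsub : { 𝒱 : Set (Set X) | 𝒱 ⊆ 𝒲 ∧ #𝒱 ≤ μ ∧ H ⊆ ⋃₀ 𝒱 } ⊆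
        { 𝒱 : Set (Set X) | 𝒱 ⊆ 𝒲 ∧ #𝒱 ≤ μ } := fun 𝒱 h => ⟨h.1, h.2.1⟩
    refine (mk_le_mk_of_subset hsub).trans ?_
    have h2 : #{ t : Set (Set X) // t ⊆ 𝒲 ∧ #t ≤ μ } ≤ max #𝒲 ℵ₀ ^ μ :=
      mk_bounded_subset_le 𝒲 μ
    refine h2.trans ?_
    have hmax : max #𝒲 ℵ₀ ≤ 2 ^ μ :=
      max_le h𝒲card (hμ.trans ((cantor μ).le))
    calc max #𝒲 ℵ₀ ^ μ ≤ (2 ^ μ) ^ μ := power_le_power_right hmax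
      _ = 2 ^ (μ * μ) := by rw [← power_mul]
      _ = 2 ^ μ := by rw [mul_eq_self hμ]
  · rintro U ⟨𝒱, ⟨h𝒱𝒲, -, -⟩, rfl⟩
    exact isOpen_sUnion fun V hV => h𝒲open V (h𝒱𝒲 hV)
  · apply Subset.antisymm
    · intro y hy
      by_contra hyH
      -- build a cover of H by elements of 𝒲 avoiding y
      set 𝒞 : Set (Set X) := { U ∈ 𝒲 | y ∉ U } with h𝒞
      have hcov : H ⊆ ⋃₀ 𝒞 := by
        intro x hx
        have hxy : y ∉ ({x} : Set X) := by
          simp only [mem_singleton_iff]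
          rintro rfl; exact hyH hx
        rw [← hf3 x hx] at hxy
        simp only [mem_sInter, not_forall] at hxy
        obtain ⟨U, hU, hyU⟩ := hxy
        have hxU : x ∈ U := by
          have : x ∈ ⋂₀ f x hx := by rw [hf3 x hx]; exact rfl
          exact this U hU
        exact ⟨U, ⟨mem_iUnion.2 ⟨x, mem_iUnion.2 ⟨hx, hU⟩⟩, hyU⟩, hxU⟩
      obtain ⟨𝒱, h𝒱𝒞, h𝒱card, h𝒱cov⟩ :=
        hLind 𝒞 (fun U hU => h𝒲open U hU.1) hcov
      have hU𝒰 : ⋃₀ 𝒱 ∈ 𝒰 :=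
        ⟨𝒱, ⟨fun V hV => (h𝒱𝒞 hV).1, h𝒱card, h𝒱cov⟩, rfl⟩
      have := hy _ hU𝒰
      obtain ⟨V, hV, hyV⟩ := this
      exact (h𝒱𝒞 hV).2 hyV
    · intro x hx
      rintro U ⟨𝒱, ⟨-, -, h𝒱cov⟩, rfl⟩
      exact h𝒱cov hx
end
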